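/- arXiv:math/0505393 — 3 statements merged into one kernel-verified Lean document; each statement's English description precedes it below -/
import Mathlib

section
/- Let p be a prime number, K a commutative ring, n a natural number, and M an n×n matrix with entries in K. Then trace(M^p) ≡ (trace M)^p modulo the ideal of K generated by (p : K); that is, trace(M^p) − (trace M)^p ∈ Ideal.span {(p : K)}. -/
open Polynomial Matrix

private lemma auxTraceMap {A B : Type*} [CommRing A] [CommRing B] (f : A →+* B)
    {m : ℕ} (M : Matrix (Fin m) (Fin m) A) :
    f (Matrix.trace M) = Matrix.trace (f.mapMatrix M) := by
  simp [Matrix.trace, RingHom.mapMatrix_apply, Matrix.map_apply, map_sum]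

private lemma auxCharpoly {p : ℕ} [Fact p.Prime] {F : Type*} [Field F] [CharP F p]
    {m : ℕ} (M : Matrix (Fin m) (Fin m) F) :
    (M ^ p).charpoly = (M.charpoly).map (frobenius F p) := by
  rcases isEmpty_or_nonempty (Fin m) with hm | hm
  · rw [Matrix.charpoly, Matrix.charpoly, det_isEmpty, det_isEmpty, Polynomial.map_one]
  · apply Polynomial.expand_injective (Fact.out : p.Prime).pos
    have key : (Polynomial.expand F p : F[X] →+* F[X]).mapMatrix (charmatrix (M ^ p)) =
        charmatrix M ^ p := by
      apply matPolyEquiv.injective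
      rw [matPolyEquiv_eq_X_pow_sub_C p M]
      conv_rhs => rw [_root_.map_pow, matPolyEquiv_charmatrix]
      rw [sub_pow_char_of_commute p ((Polynomial.C M).commute_X), _root_.map_pow]
    have h1 : Polynomial.expand F p ((M ^ p).charpoly) = (M.charpoly) ^ p := by
      rw [Matrix.charpoly, Matrix.charpoly, ← AlgHom.coe_toRingHom, RingHom.map_det, key,
        det_pow]
    rw [h1, ← Polynomial.map_frobenius_expand p (M.charpoly), Polynomial.map_expand]

private lemma auxField {p : ℕ} [Fact p.Prime] {F : Type*} [Field F] [CharP F p]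
    {m : ℕ} (M : Matrix (Fin m) (Fin m) F) :
    Matrix.trace (M ^ p) = Matrix.trace M ^ p := by
  rcases isEmpty_or_nonempty (Fin m) with hm | hm
  · simp [Matrix.trace, zero_pow (Fact.out : p.Prime).ne_zero]
  · rw [trace_eq_neg_charpoly_coeff, trace_eq_neg_charpoly_coeff, auxCharpoly,
      Polynomial.coeff_map, ← map_neg (frobenius F p), frobenius_def]

private lemma auxZmod {p : ℕ} [Fact p.Prime] {σ : Type*} {m : ℕ}
    (M : Matrix (Fin m) (Fin m) (MvPolynomial σ (ZMod p))) :
    Matrix.trace (M ^ p) = Matrix.trace M ^ p := by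
  have hinj := IsFractionRing.injective (MvPolynomial σ (ZMod p))
    (FractionRing (MvPolynomial σ (ZMod p)))
  haveI : CharP (FractionRing (MvPolynomial σ (ZMod p))) p :=
    charP_of_injective_algebraMap hinj p
  apply hinj
  rw [map_pow, auxTraceMap _ M, auxTraceMap _ (M ^ p),
    _root_.map_pow (RingHom.mapMatrix (algebraMap (MvPolynomial σ (ZMod p))
      (FractionRing (MvPolynomial σ (ZMod p))))) M p]
  exact auxField _

/-- Matrix form of the trace congruence [Chen–Le, Lem. 3.5(i)]:
for a prime `p`, a commutative ring `K`, and an `n × n` matrix `M` over `K`,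
`trace (M ^ p) ≡ (trace M) ^ p` modulo the ideal generated by `(p : K)`. -/
theorem trace_pow_congr_pow_trace (p : ℕ) (hp : p.Prime) (K : Type*) [CommRing K]
    (n : ℕ) (M : Matrix (Fin n) (Fin n) K) :
    Matrix.trace (M ^ p) - (Matrix.trace M) ^ p ∈ Ideal.span {(p : K)} := by
  haveI : Fact p.Prime := ⟨hp⟩
  set R := MvPolynomial (Fin n × Fin n) ℤ
  set Y : Matrix (Fin n) (Fin n) R := Matrix.of fun i j => MvPolynomial.X (i, j) with hY
  set φ : R →+* K := MvPolynomial.eval₂Hom (Int.castRingHom K) (fun q => M q.1 q.2) with hφ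
  have hX : φ.mapMatrix Y = M := by
    ext i j
    simp only [hY, hφ, RingHom.mapMatrix_apply, Matrix.map_apply, Matrix.of_apply]
    exact MvPolynomial.eval₂Hom_X' _ _ _
  have hdvd : (p : R) ∣ (Matrix.trace (Y ^ p) - Matrix.trace Y ^ p) := by
    have hC : (p : R) = MvPolynomial.C ((p : ℕ) : ℤ) := by
      rw [map_natCast]
    rw [hC, MvPolynomial.C_dvd_iff_zmod]
    set ψ : R →+* MvPolynomial (Fin n × Fin n) (ZMod p) :=
      MvPolynomial.map (Int.castRingHom (ZMod p)) with hψ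
    show ψ _ = 0
    rw [map_sub, map_pow, auxTraceMap ψ (Y ^ p), auxTraceMap ψ Y, map_pow, auxZmod, sub_self]
  rw [Ideal.mem_span_singleton]
  obtain ⟨c, hc⟩ := hdvd
  refine ⟨φ c, ?_⟩
  have := congrArg φ hc
  rw [map_sub, map_pow, _root_.map_mul, map_natCast] at this
  rw [← this, auxTraceMap φ (Y ^ p), auxTraceMap φ Y,
    show φ.mapMatrix (Y ^ p) = (φ.mapMatrix Y) ^ p from _root_.map_pow _ _ _, hX]
end

section
/- Let p be a prime number, K a commutative ring, V a finitely generated free K-module, and Z : V → V a K-linear endomorphism. Then Trace(Z^p) ≡ (Trace Z)^p modulo the ideal of K generated by (p : K); that is, Trace(Z^p) − (Trace Z)^p ∈ Ideal.span {(p : K)}. -/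
open Polynomial Matrix

section Aux

variable {n : Type*} [DecidableEq n] [Fintype n]

private theorem aux_charpoly_pow_char {F : Type*} [Field F] [Nonempty n] (p : ℕ)
    [hp : Fact p.Prime] [CharP F p] (M : Matrix n n F) :
    Polynomial.expand F p ((M ^ p).charpoly) = M.charpoly ^ p := by
  have h1 : ((Polynomial.expand F p : F[X] →+* F[X]).mapMatrix (charmatrix (M ^ p)))
      = charmatrix M ^ p := by
    apply matPolyEquiv.injective
    rw [matPolyEquiv_eq_X_pow_sub_C p M,
      show matPolyEquiv (M.charmatrix ^ p) = (matPolyEquiv M.charmatrix) ^ p from map_pow _ _ _,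
      matPolyEquiv_charmatrix,
      C_pow]
    exact (sub_pow_char_of_commute (x := (X : (Matrix n n F)[X])) (y := C M) (p := p)
      ((C M).commute_X)).symm
  have h2 := congrArg Matrix.det h1
  rw [← RingHom.map_det, Matrix.det_pow] at h2
  exact h2

private theorem aux_trace_pow_char_field {F : Type*} [Field F] (p : ℕ) [hp : Fact p.Prime]
    [CharP F p] (M : Matrix n n F) :
    Matrix.trace (M ^ p) = Matrix.trace M ^ p := by
  cases isEmpty_or_nonempty n
  · simp [Matrix.trace, hp.out.ne_zero]
  · have key := aux_charpoly_pow_char p M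
    set d := Fintype.card n - 1 with hd
    have hc : (M ^ p).charpoly.coeff d = M.charpoly.coeff d ^ p := by
      have h := congrArg (fun f : F[X] => f.coeff (d * p)) key
      rwa [Polynomial.coeff_expand_mul hp.out.pos, ← Polynomial.map_frobenius_expand,
        Polynomial.coeff_map, Polynomial.coeff_expand_mul hp.out.pos, frobenius_def] at h
    rw [Matrix.trace_eq_neg_charpoly_coeff, Matrix.trace_eq_neg_charpoly_coeff, ← hd, hc,
      neg_pow, neg_one_pow_char F, neg_one_mul]

private theorem aux_trace_map {R S : Type*} [CommRing R] [CommRing S] (f : R →+* S)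
    (M : Matrix n n R) (k : ℕ) :
    f (Matrix.trace (M ^ k)) = Matrix.trace ((M.map f) ^ k) := by
  have h1 : (M ^ k).map f = (M.map f) ^ k := by
    simpa [RingHom.mapMatrix_apply] using map_pow f.mapMatrix M k
  rw [← h1]
  simp [Matrix.trace, Matrix.diag, map_sum, Matrix.map_apply]

private theorem aux_trace_pow_charP {R : Type*} [CommRing R] (p : ℕ) [hp : Fact p.Prime]
    [CharP R p] (M : Matrix n n R) :
    Matrix.trace (M ^ p) = Matrix.trace M ^ p := by
  classical
  set A := MvPolynomial (n × n) (ZMod p) with hA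
  let F := FractionRing A
  have hAF : Function.Injective (algebraMap A F) := IsFractionRing.injective A F
  haveI : CharP F p := charP_of_injective_algebraMap hAF p
  set X : Matrix n n A := Matrix.of (fun i j => MvPolynomial.X (i, j)) with hX
  have hgen : Matrix.trace (X ^ p) = Matrix.trace X ^ p := by
    apply hAF
    rw [aux_trace_map (algebraMap A F) X p, map_pow]
    have h2 : (algebraMap A F) (Matrix.trace X) = Matrix.trace (X.map (algebraMap A F)) := by
      simpa using aux_trace_map (algebraMap A F) X 1
    rw [h2]
    exact aux_trace_pow_char_field p (X.map (algebraMap A F))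
  let ψ : A →+* R := MvPolynomial.eval₂Hom (ZMod.castHom dvd_rfl R) (fun s : n × n => M s.1 s.2)
  have hψ : X.map ψ = M := by
    ext i j
    show ψ (MvPolynomial.X (i, j)) = M i j
    exact MvPolynomial.eval₂Hom_X' _ _ _
  have h3 := congrArg ψ hgen
  rw [aux_trace_map ψ X p, map_pow, hψ] at h3
  have h4 : ψ (Matrix.trace X) = Matrix.trace M := by
    have := aux_trace_map ψ X 1
    simpa [hψ] using this
  rwa [h4] at h3

end Aux

/-- [Chen–Le, Lem. 3.5(i)]: for a prime `p`, a commutative ring `K`, a finitely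
generated free `K`-module `V`, and a `K`-linear endomorphism `Z` of `V`,
`Trace (Z ^ p) ≡ (Trace Z) ^ p` modulo the ideal generated by `(p : K)`. -/
theorem trace_pow_endomorphism_congr (p : ℕ) (hp : p.Prime) (K : Type*) [CommRing K]
    (V : Type*) [AddCommGroup V] [Module K V] [Module.Free K V] [Module.Finite K V]
    (Z : V →ₗ[K] V) :
    LinearMap.trace K V (Z ^ p) - (LinearMap.trace K V Z) ^ p ∈ Ideal.span {(p : K)} := by
  classical
  haveI : Fact p.Prime := ⟨hp⟩
  let b := Module.Free.chooseBasis K V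
  set M := LinearMap.toMatrix b b Z with hM
  have hMp : LinearMap.toMatrix b b (Z ^ p) = M ^ p := by
    simpa [LinearMap.toMatrixAlgEquiv, hM] using map_pow (LinearMap.toMatrixAlgEquiv b) Z p
  rw [LinearMap.trace_eq_matrix_trace K b (Z ^ p), LinearMap.trace_eq_matrix_trace K b Z, hMp,
    ← hM]
  -- now a pure matrix statement
  set I := Ideal.span {(p : K)} with hI
  rw [← Ideal.Quotient.eq]
  set π := Ideal.Quotient.mk I with hπ
  have hp0 : (p : K ⧸ I) = 0 := by
    have hmem : (p : K) ∈ I := Ideal.subset_span rfl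
    have := (Ideal.Quotient.eq_zero_iff_mem).mpr hmem
    simpa using this
  have key : Matrix.trace ((M.map π) ^ p) = Matrix.trace (M.map π) ^ p := by
    rcases subsingleton_or_nontrivial (K ⧸ I) with hsub | hnt
    · exact Subsingleton.elim _ _
    · have hdvd : ringChar (K ⧸ I) ∣ p := ringChar.dvd hp0
      have hchar : ringChar (K ⧸ I) = p := by
        rcases (Nat.Prime.eq_one_or_self_of_dvd hp _ hdvd) with h1 | h1
        · exact absurd h1 (CharP.ringChar_ne_one)
        · exact h1
      haveI : CharP (K ⧸ I) p := hchar ▸ ringChar.charP (K ⧸ I)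
      exact aux_trace_pow_charP p (M.map π)
  calc π (Matrix.trace (M ^ p)) = Matrix.trace ((M.map π) ^ p) := aux_trace_map π M p
    _ = Matrix.trace (M.map π) ^ p := key
    _ = (π (Matrix.trace M)) ^ p := by
        have := aux_trace_map π M 1
        simp only [pow_one] at this
        rw [this]
    _ = π (Matrix.trace M ^ p) := (map_pow π _ p).symm
end

section
/- Let p be a prime number, K a commutative ring, and J an ideal of K with (p : K) ∈ J. Let S be a finite type equipped with an action of the cyclic group ZMod p, let f : S → K be invariant under the action (f(g • s) = f(s) for all g ∈ ZMod p, s ∈ S), and let g : S → K be a function such that for every fixed point s of the action, f(s) − g(s)^p ∈ J. Then ∑_{s ∈ S} f(s) ≡ (∑_{s ∈ Fix} g(s))^p modulo J, where Fix is the set of points of S fixed by every element of ZMod p; that is, ∑_{s ∈ S} f(s) − (∑_{s ∈ Fix} g(s))^p ∈ J. -/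
open scoped Classical

/-- Frobenius congruence: in a commutative ring where `(p : R) = 0`,
`(∑ x_i) ^ p = ∑ x_i ^ p` for a prime `p`. -/
lemma sum_pow_prime_of_cast_eq_zero {R : Type*} [CommRing R] {p : ℕ} (hp : p.Prime)
    (h : (p : R) = 0) {ι : Type*} (s : Finset ι) (x : ι → R) :
    (∑ i ∈ s, x i) ^ p = ∑ i ∈ s, x i ^ p := by
  induction s using Finset.cons_induction with
  | empty => simp [zero_pow hp.ne_zero]
  | cons a s ha ih =>
      rw [Finset.sum_cons, Finset.sum_cons, add_pow_prime_eq hp, ih, h, zero_mul, zero_mul, zero_mul, add_zero]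

/-- A non-fixed point of an action of a group of prime order `p` has an orbit of
cardinality `p`. -/
lemma card_orbit_of_not_fixed (p : ℕ) (hp : p.Prime)
    (S : Type*) [Fintype S] [MulAction (Multiplicative (ZMod p)) S]
    (t : S) (ht : ¬ ∀ γ : Multiplicative (ZMod p), γ • t = t) :
    Fintype.card (MulAction.orbit (Multiplicative (ZMod p)) t) = p := by
  haveI : NeZero p := ⟨hp.ne_zero⟩
  have h1 := MulAction.card_orbit_mul_card_stabilizer_eq_card_group (Multiplicative (ZMod p)) t
  have hcard : Fintype.card (Multiplicative (ZMod p)) = p := by simp [ZMod.card]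
  rw [hcard] at h1
  have hdvd : Fintype.card (MulAction.orbit (Multiplicative (ZMod p)) t) ∣ p := ⟨_, h1.symm⟩
  rcases hp.eq_one_or_self_of_dvd _ hdvd with h | h
  · exact absurd (MulAction.mem_fixedPoints.mp
      (MulAction.mem_fixedPoints_iff_card_orbit_eq_one.mpr h)) ht
  · exact h

/-- A point in the orbit of a non-fixed point is not fixed. -/
lemma not_fixed_of_orbit {G : Type*} [Group G] {S : Type*} [MulAction G S]
    {t a : S} (ha : a ∈ MulAction.orbit G t) (ht : ¬ ∀ γ : G, γ • t = t) :
    ¬ ∀ γ : G, γ • a = a := by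
  intro hafix
  obtain ⟨γ, hγ⟩ := ha
  apply ht
  intro δ
  have h1 : t = γ⁻¹ • a := by rw [← hγ, inv_smul_smul]
  have hta : t = a := by rw [h1, hafix]
  rw [hta]
  exact hafix δ

/-- Abstract form of Lemma 4.2 of the paper (`{L} ≡ {L_*}^p (mod J_p)`):
for a prime `p`, an ideal `J` of a commutative ring `K` containing `(p : K)`,
a finite type `S` with an action of the cyclic group `ZMod p`, an invariant
function `f : S → K`, and a function `g : S → K` with `f s ≡ g s ^ p (mod J)` at
every fixed point `s`, we have `∑ s, f s ≡ (∑ s ∈ Fix, g s) ^ p (mod J)`. -/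
theorem sum_invariant_congr_pow_sum_fixed (p : ℕ) (hp : p.Prime) (K : Type*) [CommRing K]
    (J : Ideal K) (hpJ : (p : K) ∈ J)
    (S : Type*) [Fintype S] [MulAction (Multiplicative (ZMod p)) S]
    (f : S → K) (hf : ∀ (γ : Multiplicative (ZMod p)) (s : S), f (γ • s) = f s)
    (g : S → K)
    (hg : ∀ s : S, (∀ γ : Multiplicative (ZMod p), γ • s = s) → f s - g s ^ p ∈ J) :
    (∑ s, f s) -
      (∑ s ∈ Finset.univ.filter (fun s : S => ∀ γ : Multiplicative (ZMod p), γ • s = s), g s) ^ p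
      ∈ J := by
  haveI : NeZero p := ⟨hp.ne_zero⟩
  rw [← Ideal.Quotient.eq]
  set φ := Ideal.Quotient.mk J with hφ
  have hpQ : (p : K ⧸ J) = 0 := by
    rw [← map_natCast φ, hφ, Ideal.Quotient.eq_zero_iff_mem]; exact hpJ
  rw [map_sum, map_pow, map_sum, sum_pow_prime_of_cast_eq_zero hp hpQ]
  -- replace `φ (g s) ^ p` by `φ (f s)` at fixed points
  trans ∑ s ∈ Finset.univ.filter
      (fun s : S => ∀ γ : Multiplicative (ZMod p), γ • s = s), φ (f s)
  rotate_left
  · symm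
    refine Finset.sum_congr (by ext a; simp only [Finset.mem_filter]) fun s hs => ?_
    rw [Finset.mem_filter] at hs
    rw [← map_pow]
    exact (Ideal.Quotient.eq.mpr (hg s hs.2)).symm
  -- split the full sum into fixed and non-fixed parts
  rw [← Finset.sum_filter_add_sum_filter_not Finset.univ
      (fun s : S => ∀ γ : Multiplicative (ZMod p), γ • s = s) (fun s => φ (f s))]
  suffices h0 : ∑ s ∈ Finset.univ.filter
      (fun s : S => ¬ ∀ γ : Multiplicative (ZMod p), γ • s = s), φ (f s) = 0 by
    rw [h0, add_zero]
  -- sum over non-fixed points vanishes: group them into orbits of size `p`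
  set r := MulAction.orbitRel (Multiplicative (ZMod p)) S with hr
  rw [← Finset.sum_fiberwise (Finset.univ.filter
      (fun s : S => ¬ ∀ γ : Multiplicative (ZMod p), γ • s = s)) (Quotient.mk r)
      (fun s => φ (f s))]
  apply Finset.sum_eq_zero
  intro ω _
  induction ω using Quotient.inductionOn with
  | h t =>
    by_cases ht : ∀ γ : Multiplicative (ZMod p), γ • t = t
    · -- fiber is empty
      apply Finset.sum_eq_zero
      intro a ha
      rw [Finset.mem_filter, Finset.mem_filter] at ha
      obtain ⟨⟨-, hanf⟩, haorb⟩ := ha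
      have haorb' : a ∈ MulAction.orbit (Multiplicative (ZMod p)) t := by
        rw [← MulAction.orbitRel_apply]
        exact Quotient.eq.mp haorb
      obtain ⟨γ, hγ⟩ := haorb'
      have hγ' : γ • t = a := hγ
      exact absurd (fun δ => by rw [← hγ', ht γ]; exact ht δ) hanf
    · -- fiber is the orbit of `t`, which has `p` elements and constant `φ ∘ f`
      have hfiber : (Finset.univ.filter
          (fun s : S => ¬ ∀ γ : Multiplicative (ZMod p), γ • s = s)).filter
          (fun a => Quotient.mk r a = Quotient.mk r t)
          = (MulAction.orbit (Multiplicative (ZMod p)) t).toFinset := by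
        ext a
        simp only [Finset.mem_filter, Finset.mem_univ, true_and, Set.mem_toFinset]
        constructor
        · rintro ⟨-, haorb⟩
          rw [← MulAction.orbitRel_apply]
          exact Quotient.eq.mp haorb
        · intro haorb
          refine ⟨not_fixed_of_orbit haorb ht, Quotient.eq.mpr ?_⟩
          rw [hr]
          rwa [MulAction.orbitRel_apply]
      rw [hfiber]
      have hconst : ∀ a ∈ (MulAction.orbit (Multiplicative (ZMod p)) t).toFinset,
          φ (f a) = φ (f t) := by
        intro a ha
        rw [Set.mem_toFinset] at ha
        obtain ⟨γ, hγ⟩ := ha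
        rw [← hγ, hf]
      rw [Finset.sum_congr rfl hconst, Finset.sum_const, Set.toFinset_card,
        card_orbit_of_not_fixed p hp S t ht, nsmul_eq_mul, hpQ, zero_mul]
end
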